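/- The free-boundary map θ ↦ β_ε(θ) is continuous on (0,∞). -/

import Mathlib

open Set Filter Topology MeasureTheory

noncomputable section

/-- `ℓ^ε(x,θ) = −b(x)c(x) + π(x,θ) − ½σ(x)²(ε c(x)² + c'(x))`. -/
def ell (ε : ℝ) (b σ c : ℝ → ℝ) (π : ℝ → ℝ → ℝ) (x θ : ℝ) : ℝ :=
  -(b x) * c x + π x θ - (1 / 2) * (σ x) ^ 2 * (ε * (c x) ^ 2 + deriv c x)

/-- `ℓ̲^ε(x) = −b(x)c(x) + κ(x) − ½σ(x)²(ε c(x)² + c'(x))`. -/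
def ellKappa (ε : ℝ) (b σ c κ : ℝ → ℝ) (x : ℝ) : ℝ :=
  -(b x) * c x + κ x - (1 / 2) * (σ x) ^ 2 * (ε * (c x) ^ 2 + deriv c x)

/-- `φ` is a C¹ solution of the auxiliary boundary value problem with boundary point `β`,
mean-field parameter `θ` and perturbation `γ`. -/
def IsAuxSol (ε : ℝ) (b σ c : ℝ → ℝ) (π : ℝ → ℝ → ℝ) (β θ γ : ℝ) (φ : ℝ → ℝ) : Prop :=
  ContDiffOn ℝ 1 φ (Ioi 0) ∧
    (∀ x ∈ Ioo (0 : ℝ) β,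
      (1 / 2) * (σ x) ^ 2 * deriv φ x + b x * φ x - (ε / 2) * (σ x) ^ 2 * (φ x) ^ 2
        = ell ε b σ c π β θ - π x θ + γ) ∧
    (∀ x : ℝ, β ≤ x → φ x = -(c x))

/-- `φ` is a C¹ solution of the limiting (robust) auxiliary boundary value problem. -/
def IsAuxSolKappa (ε : ℝ) (b σ c κ : ℝ → ℝ) (β : ℝ) (φ : ℝ → ℝ) : Prop :=
  ContDiffOn ℝ 1 φ (Ioi 0) ∧
    (∀ x ∈ Ioo (0 : ℝ) β,
      (1 / 2) * (σ x) ^ 2 * deriv φ x + b x * φ x - (ε / 2) * (σ x) ^ 2 * (φ x) ^ 2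
        = ellKappa ε b σ c κ β - κ x) ∧
    (∀ x : ℝ, β ≤ x → φ x = -(c x))

/-- The standing assumptions of the paper (Assumptions 2.1, 2.2, 2.4 and 3.1). -/
structure Setting where
  ε : ℝ
  b : ℝ → ℝ
  σ : ℝ → ℝ
  c : ℝ → ℝ
  π : ℝ → ℝ → ℝ
  xhat : ℝ → ℝ
  ell0 : ℝ → ℝ
  hε : 0 < ε
  hb : ContDiffOn ℝ 1 b (Ioi 0)
  hσ : ContDiffOn ℝ 1 σ (Ioi 0)
  hσpos : ∀ x : ℝ, 0 < x → 0 < σ x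
  hgrowth : ∃ C > (0 : ℝ), ∃ ζ > (0 : ℝ), ∀ x : ℝ, 0 < x → |b x| + |σ x| ≤ C * (1 + x ^ ζ)
  hc : ContDiffOn ℝ 1 c (Ioi 0)
  hcanti : AntitoneOn c (Ioi 0)
  clow : ℝ
  chigh : ℝ
  hclow : 0 < clow
  hcle : clow ≤ chigh
  hcbd : ∀ x : ℝ, 0 < x → c x ∈ Icc clow chigh
  hπC2 : ∀ θ : ℝ, 0 < θ → ContDiffOn ℝ 2 (fun x => π x θ) (Ioi 0)
  hπpos : ∀ x θ : ℝ, 0 < x → 0 < θ → 0 < π x θ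
  hπmono : ∀ θ : ℝ, 0 < θ → MonotoneOn (fun x => π x θ) (Ioi 0)
  hπconc : ∀ θ : ℝ, 0 < θ → ConcaveOn ℝ (Ioi 0) (fun x => π x θ)
  hπxθcont : ContinuousOn
    (fun p : ℝ × ℝ => deriv (fun θ' => deriv (fun x' => π x' θ') p.1) p.2) (Ioi 0 ×ˢ Ioi 0)
  hπxθneg : ∀ x θ : ℝ, 0 < x → 0 < θ →
    deriv (fun θ' => deriv (fun x' => π x' θ') x) θ < 0
  hxhatpos : ∀ θ : ℝ, 0 < θ → 0 < xhat θ
  hellincr : ∀ θ : ℝ, 0 < θ → ∀ x : ℝ, 0 < x → x < xhat θ →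
    0 < deriv (fun y => ell ε b σ c π y θ) x
  hellcrit : ∀ θ : ℝ, 0 < θ → deriv (fun y => ell ε b σ c π y θ) (xhat θ) = 0
  helldecr : ∀ θ : ℝ, 0 < θ → ∀ x : ℝ, xhat θ < x →
    deriv (fun y => ell ε b σ c π y θ) x < 0
  hellbot : ∀ θ : ℝ, 0 < θ → Tendsto (fun x => ell ε b σ c π x θ) atTop atBot
  helllim0 : ∀ θ : ℝ, 0 < θ →
    Tendsto (fun x => ell ε b σ c π x θ) (nhdsWithin 0 (Ioi 0)) (nhds (ell0 θ))
  hxunder : ∀ θ : ℝ, 0 < θ → ∃ x : ℝ, xhat θ ≤ x ∧ ell ε b σ c π x θ = ell0 θ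

namespace Setting

/-- `ℓ^ε` associated with the data of the setting. -/
def ellS (S : Setting) (x θ : ℝ) : ℝ := ell S.ε S.b S.σ S.c S.π x θ

/-- `x̲̂_ε(θ) = inf {x ≥ x̂_ε(θ) : ℓ^ε(x,θ) = ℓ^ε(0⁺,θ)}`. -/
def xunder (S : Setting) (θ : ℝ) : ℝ :=
  sInf {x : ℝ | S.xhat θ ≤ x ∧ S.ellS x θ = S.ell0 θ}

/-- `B_ε(θ) = {β > 0 : φ_β(x,θ) ≥ −c(x) for all x ∈ (0,β]}`. -/
def Bset (S : Setting) (φ : ℝ → ℝ → ℝ → ℝ) (θ : ℝ) : Set ℝ :=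
  {β : ℝ | 0 < β ∧ ∀ x : ℝ, 0 < x → x ≤ β → -(S.c x) ≤ φ β θ x}

/-- `β_ε(θ) = inf B_ε(θ)`. -/
def betaE (S : Setting) (φ : ℝ → ℝ → ℝ → ℝ) (θ : ℝ) : ℝ := sInf (S.Bset φ θ)

/-- `V_x^ε(x,θ)`: equal to `φ_{β_ε(θ)}(x,θ)` below the free boundary, `−c(x)` above it. -/
def Vx (S : Setting) (φ : ℝ → ℝ → ℝ → ℝ) (x θ : ℝ) : ℝ :=
  if x < S.betaE φ θ then φ (S.betaE φ θ) θ x else -(S.c x)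

/-- The candidate potential `V^ε(x,θ)`, normalized by `V^ε(β_ε(θ),θ) = 0`. -/
def V (S : Setting) (φ : ℝ → ℝ → ℝ → ℝ) (x θ : ℝ) : ℝ :=
  if x < S.betaE φ θ then -(∫ y in x..S.betaE φ θ, φ (S.betaE φ θ) θ y)
  else -(∫ y in S.betaE φ θ..x, S.c y)

/-- The scale density `S'(y) = exp(−∫_{x₀}^y 2b/σ² )` of the uncontrolled diffusion. -/
def scaleD (S : Setting) (x₀ y : ℝ) : ℝ :=
  Real.exp (-(∫ z in x₀..y, 2 * S.b z / (S.σ z) ^ 2))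

/-- `(W,λ)` is a classical solution of the variational inequality (free-boundary problem). -/
def IsVISol (S : Setting) (θ lam : ℝ) (W : ℝ → ℝ) : Prop :=
  ContDiffOn ℝ 2 W (Ioi 0) ∧
    ∀ x : ℝ, 0 < x →
      max ((1 / 2) * (S.σ x) ^ 2 * deriv (deriv W) x + S.b x * deriv W x
            - (S.ε / 2) * (S.σ x) ^ 2 * (deriv W x) ^ 2 + S.π x θ - lam)
        (-(deriv W x) - S.c x) = 0

/-- The unnormalized stationary density. -/
def densRaw (S : Setting) (φ : ℝ → ℝ → ℝ → ℝ) (θ x : ℝ) : ℝ :=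
  (2 / (S.σ x) ^ 2) *
    Real.exp (-(∫ y in x..S.betaE φ θ, 2 * S.b y / (S.σ y) ^ 2)
      + 2 * S.ε * ∫ y in x..S.betaE φ θ, S.Vx φ y θ)

/-- The normalizing constant `Z(θ)`. -/
def Znorm (S : Setting) (φ : ℝ → ℝ → ℝ → ℝ) (θ : ℝ) : ℝ :=
  ∫ x in Ioc (0 : ℝ) (S.betaE φ θ), S.densRaw φ θ x

/-- The stationary probability measure `ν^{θ,ε}` with density `m^{θ,ε}`. -/
def nu (S : Setting) (φ : ℝ → ℝ → ℝ → ℝ) (θ : ℝ) : Measure ℝ :=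
  volume.withDensity fun x =>
    ENNReal.ofReal ((Ioc (0 : ℝ) (S.betaE φ θ)).indicator
      (fun y => S.densRaw φ θ y / S.Znorm φ θ) x)

end Setting

namespace FreeBoundaryAux

/-- abbreviation: `ℓ^ε(·,θ)` of the setting, as a function of `x`. -/
def L (S : Setting) (θ x : ℝ) : ℝ := ell S.ε S.b S.σ S.c S.π x θ

lemma L_theta_diff (S : Setting) (θ θ' x : ℝ) :
    L S θ' x - L S θ x = S.π x θ' - S.π x θ := by
  unfold L ell
  ring

lemma contOn_deriv_c (S : Setting) : ContinuousOn (deriv S.c) (Ioi (0:ℝ)) := by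
  have h := S.hc.continuousOn_derivWithin (isOpen_Ioi.uniqueDiffOn) le_rfl
  exact h.congr fun x hx => (derivWithin_of_isOpen isOpen_Ioi hx).symm

lemma contOn_L (S : Setting) {θ : ℝ} (hθ : 0 < θ) :
    ContinuousOn (L S θ) (Ioi (0:ℝ)) := by
  have hb := S.hb.continuousOn
  have hσ := S.hσ.continuousOn
  have hc := S.hc.continuousOn
  have hπ := (S.hπC2 θ hθ).continuousOn
  have hdc := contOn_deriv_c S
  unfold L ell
  exact ((hb.neg.mul hc).add hπ).sub
    (((continuousOn_const.mul (hσ.pow 2))).mul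
      ((continuousOn_const.mul (hc.pow 2)).add hdc))

lemma L_lt_of_le_xhat (S : Setting) {θ a b : ℝ} (hθ : 0 < θ) (ha : 0 < a)
    (hab : a < b) (hb : b ≤ S.xhat θ) : L S θ a < L S θ b := by
  have hmono : StrictMonoOn (L S θ) (Icc a b) := by
    apply strictMonoOn_of_deriv_pos (convex_Icc a b)
    · exact (contOn_L S hθ).mono fun x hx => lt_of_lt_of_le ha hx.1
    · intro x hx
      rw [interior_Icc] at hx
      exact S.hellincr θ hθ x (ha.trans hx.1) (lt_of_lt_of_le hx.2 hb)
  exact hmono (left_mem_Icc.2 hab.le) (right_mem_Icc.2 hab.le) hab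

lemma L_le_of_le_xhat (S : Setting) {θ a b : ℝ} (hθ : 0 < θ) (ha : 0 < a)
    (hab : a ≤ b) (hb : b ≤ S.xhat θ) : L S θ a ≤ L S θ b := by
  rcases eq_or_lt_of_le hab with rfl | h
  · exact le_rfl
  · exact (L_lt_of_le_xhat S hθ ha h hb).le

lemma L_lt_of_ge_xhat (S : Setting) {θ a b : ℝ} (hθ : 0 < θ) (ha : S.xhat θ ≤ a)
    (hab : a < b) : L S θ b < L S θ a := by
  have h0 : 0 < a := lt_of_lt_of_le (S.hxhatpos θ hθ) ha
  have hmono : StrictAntiOn (L S θ) (Icc a b) := by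
    apply strictAntiOn_of_deriv_neg (convex_Icc a b)
    · exact (contOn_L S hθ).mono fun x hx => lt_of_lt_of_le h0 hx.1
    · intro x hx
      rw [interior_Icc] at hx
      exact S.helldecr θ hθ x (lt_of_le_of_lt ha hx.1)
  exact hmono (left_mem_Icc.2 hab.le) (right_mem_Icc.2 hab.le) hab

lemma L_le_of_ge_xhat (S : Setting) {θ a b : ℝ} (hθ : 0 < θ) (ha : S.xhat θ ≤ a)
    (hab : a ≤ b) : L S θ b ≤ L S θ a := by
  rcases eq_or_lt_of_le hab with rfl | h
  · exact le_rfl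
  · exact (L_lt_of_ge_xhat S hθ ha h).le

/-- quasiconcavity of the unimodal `ℓ`. -/
lemma L_quasiconcave (S : Setting) {θ a b y : ℝ} (hθ : 0 < θ) (ha : 0 < a)
    (hay : a ≤ y) (hyb : y ≤ b) : min (L S θ a) (L S θ b) ≤ L S θ y := by
  rcases le_or_gt y (S.xhat θ) with hy | hy
  · exact le_trans (min_le_left _ _) (L_le_of_le_xhat S hθ ha hay hy)
  · exact le_trans (min_le_right _ _) (L_le_of_ge_xhat S hθ hy.le hyb)

lemma ell0_lt_L (S : Setting) {θ y : ℝ} (hθ : 0 < θ) (hy : 0 < y)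
    (hyx : y ≤ S.xhat θ) : S.ell0 θ < L S θ y := by
  have hy2 : (0:ℝ) < y / 2 := by linarith
  have hlt : L S θ (y/2) < L S θ y := L_lt_of_le_xhat S hθ hy2 (by linarith) hyx
  have hle : S.ell0 θ ≤ L S θ (y/2) := by
    apply le_of_tendsto (S.helllim0 θ hθ)
    filter_upwards [Ioo_mem_nhdsGT_of_mem (by constructor <;> linarith :
      (0:ℝ) ∈ Ico 0 (y/2))] with z hz
    exact L_le_of_le_xhat S hθ hz.1 hz.2.le (le_trans (by linarith [hz.2]) hyx)
  linarith

end FreeBoundaryAux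

namespace FreeBoundaryAux

/-- Backward sign propagation: if `w' = p w + r` with `r ≤ 0` on `(a,b)` and `w(b) ≥ 0`,
then `w ≥ 0 on [a,b]`. -/
lemma back_nonneg {w p r : ℝ → ℝ} {a b : ℝ} (hab : a ≤ b)
    (hw : ContinuousOn w (Icc a b))
    (hd : ∀ x ∈ Ioo a b, HasDerivAt w (p x * w x + r x) x)
    (hp : ∃ M, ∀ x ∈ Ioo a b, |p x| ≤ M)
    (hr : ∀ x ∈ Ioo a b, r x ≤ 0)
    (hwb : 0 ≤ w b) : ∀ x ∈ Icc a b, 0 ≤ w x := by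
  obtain ⟨M, hM⟩ := hp
  by_contra hcon
  push_neg at hcon
  obtain ⟨x₀, hx₀, hwx₀⟩ := hcon
  have hx₀b : x₀ < b := by
    rcases eq_or_lt_of_le hx₀.2 with rfl | h
    · exact absurd hwb (not_le.2 hwx₀)
    · exact h
  -- the set of points ≥ x₀ where w is nonnegative
  set A : Set ℝ := Icc x₀ b ∩ w ⁻¹' (Ici 0) with hA
  have hAclosed : IsClosed A :=
    ContinuousOn.preimage_isClosed_of_isClosed
      (hw.mono (Icc_subset_Icc_left hx₀.1)) isClosed_Icc isClosed_Ici
  have hAne : A.Nonempty := ⟨b, ⟨⟨hx₀b.le, le_rfl⟩, hwb⟩⟩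
  have hAbdd : BddBelow A := ⟨x₀, fun y hy => hy.1.1⟩
  set t₀ := sInf A with ht₀
  have ht₀A : t₀ ∈ A := hAclosed.csInf_mem hAne hAbdd
  have ht₀x₀ : x₀ < t₀ := by
    rcases eq_or_lt_of_le ht₀A.1.1 with h | h
    · exact absurd (h ▸ ht₀A.2) (not_le.2 hwx₀)
    · exact h
  have hneg : ∀ x ∈ Ico x₀ t₀, w x < 0 := by
    intro x hx
    by_contra hnn
    push_neg at hnn
    have : x ∈ A := ⟨⟨hx.1, le_trans hx.2.le ht₀A.1.2⟩, hnn⟩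
    exact absurd (csInf_le hAbdd this) (not_le.2 hx.2)
  -- consider g = w * exp(M x) on [x₀, t₀]
  set g : ℝ → ℝ := fun x => w x * Real.exp (M * x) with hg
  have hsub : Icc x₀ t₀ ⊆ Icc a b := Icc_subset_Icc hx₀.1 ht₀A.1.2
  have hganti : AntitoneOn g (Icc x₀ t₀) := by
    apply antitoneOn_of_deriv_nonpos (convex_Icc _ _)
    · exact ((hw.mono hsub).mul (Real.continuous_exp.comp
        (continuous_const.mul continuous_id)).continuousOn)
    · intro x hx
      rw [interior_Icc] at hx
      have hxab : x ∈ Ioo a b :=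
        ⟨lt_of_le_of_lt hx₀.1 hx.1, lt_of_lt_of_le hx.2 (le_trans ht₀A.1.2 le_rfl)⟩
      have hdg : HasDerivAt g ((p x * w x + r x) * Real.exp (M * x)
          + w x * (Real.exp (M * x) * (M * 1))) x := by
        exact (hd x hxab).mul (((hasDerivAt_id x).const_mul M).exp)
      exact hdg.differentiableAt.differentiableWithinAt
    · intro x hx
      rw [interior_Icc] at hx
      have hxab : x ∈ Ioo a b := ⟨lt_of_le_of_lt hx₀.1 hx.1, lt_of_lt_of_le hx.2 ht₀A.1.2⟩
      have hdg : HasDerivAt g ((p x * w x + r x) * Real.exp (M * x)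
          + w x * (Real.exp (M * x) * (M * 1))) x :=
        (hd x hxab).mul (((hasDerivAt_id x).const_mul M).exp)
      rw [hdg.deriv]
      have hwneg : w x < 0 := hneg x ⟨hx.1.le, hx.2⟩
      have h1 : (p x + M) * w x ≤ 0 := by
        apply mul_nonpos_of_nonneg_of_nonpos _ hwneg.le
        have := hM x hxab
        have := abs_le.1 this
        linarith [this.1]
      have h2 : r x ≤ 0 := hr x hxab
      have hexp : 0 < Real.exp (M * x) := Real.exp_pos _
      nlinarith [hexp]
  have hlt : g t₀ ≤ g x₀ :=
    hganti (left_mem_Icc.2 ht₀x₀.le) (right_mem_Icc.2 ht₀x₀.le) ht₀x₀.le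
  have hgx₀ : g x₀ < 0 := mul_neg_of_neg_of_pos hwx₀ (Real.exp_pos _)
  have hgt₀ : 0 ≤ g t₀ := mul_nonneg ht₀A.2 (Real.exp_pos _).le
  linarith

/-- Strict violation: if `u' = p u + r` with `r > 0` on `(a,b)`, `u(b) = 0`,
and `u ≥ 0` on `[a,b]`, we get a contradiction. -/
lemma back_violation {u p r : ℝ → ℝ} {a b : ℝ} (hab : a < b)
    (hu : ContinuousOn u (Icc a b))
    (hd : ∀ x ∈ Ioo a b, HasDerivAt u (p x * u x + r x) x)
    (hp : ∃ M, ∀ x ∈ Ioo a b, |p x| ≤ M)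
    (hr : ∀ x ∈ Ioo a b, 0 < r x)
    (hub : u b = 0)
    (hnn : ∀ x ∈ Icc a b, 0 ≤ u x) : False := by
  obtain ⟨M, hM⟩ := hp
  set g : ℝ → ℝ := fun x => u x * Real.exp (M * x) with hg
  have hgmono : StrictMonoOn g (Icc a b) := by
    apply strictMonoOn_of_deriv_pos (convex_Icc _ _)
    · exact (hu.mul (Real.continuous_exp.comp
        (continuous_const.mul continuous_id)).continuousOn)
    · intro x hx
      rw [interior_Icc] at hx
      have hdg : HasDerivAt g ((p x * u x + r x) * Real.exp (M * x)
          + u x * (Real.exp (M * x) * (M * 1))) x :=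
        (hd x hx).mul (((hasDerivAt_id x).const_mul M).exp)
      rw [hdg.deriv]
      have h1 : 0 ≤ (p x + M) * u x := by
        apply mul_nonneg _ (hnn x ⟨hx.1.le, hx.2.le⟩)
        have := abs_le.1 (hM x hx)
        linarith [this.1]
      have h2 : 0 < r x := hr x hx
      have hexp : 0 < Real.exp (M * x) := Real.exp_pos _
      nlinarith
  have := hgmono (left_mem_Icc.2 hab.le) (right_mem_Icc.2 hab.le) hab
  have hga : 0 ≤ g a := mul_nonneg (hnn a (left_mem_Icc.2 hab.le)) (Real.exp_pos _).le
  have hgb : g b = 0 := by simp [hg, hub]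
  linarith [this, hga, hgb.symm ▸ this]

end FreeBoundaryAux

namespace FreeBoundaryAux

section Sol
variable (S : Setting) (φ : ℝ → ℝ → ℝ → ℝ)

/-- coefficient in the `u = φ + c` linear ODE. -/
def Pu (β θ x : ℝ) : ℝ :=
  2 / (S.σ x) ^ 2 * ((S.ε / 2) * (S.σ x) ^ 2 * (φ β θ x - S.c x) - S.b x)

/-- coefficient in the two-solution `w` linear ODE. -/
def Pw (β₁ θ₁ β₂ θ₂ x : ℝ) : ℝ :=
  2 / (S.σ x) ^ 2 * ((S.ε / 2) * (S.σ x) ^ 2 * (φ β₁ θ₁ x + φ β₂ θ₂ x) - S.b x)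

variable (hφ : ∀ β θ : ℝ, 0 < β → 0 < θ → IsAuxSol S.ε S.b S.σ S.c S.π β θ 0 (φ β θ))

include hφ in

lemma phi_cont {β θ : ℝ} (hβ : 0 < β) (hθ : 0 < θ) :
    ContinuousOn (φ β θ) (Ioi 0) := (hφ β θ hβ hθ).1.continuousOn

include hφ in
lemma phi_hasDeriv {β θ x : ℝ} (hβ : 0 < β) (hθ : 0 < θ) (hx : 0 < x) :
    HasDerivAt (φ β θ) (deriv (φ β θ) x) x :=
  (((hφ β θ hβ hθ).1.differentiableOn one_ne_zero).differentiableAt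
    (isOpen_Ioi.mem_nhds hx)).hasDerivAt

lemma c_hasDeriv {x : ℝ} (hx : 0 < x) : HasDerivAt S.c (deriv S.c x) x :=
  ((S.hc.differentiableOn one_ne_zero).differentiableAt (isOpen_Ioi.mem_nhds hx)).hasDerivAt

lemma sigma_sq_ne {x : ℝ} (hx : 0 < x) : (S.σ x) ^ 2 ≠ 0 :=
  pow_ne_zero 2 (ne_of_gt (S.hσpos x hx))

include hφ in
/-- the `u = φ_β(·,θ) + c` equation in explicit form. -/
lemma u_hasDeriv {β θ x : ℝ} (hβ : 0 < β) (hθ : 0 < θ) (hx : x ∈ Ioo 0 β) :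
    HasDerivAt (fun y => φ β θ y + S.c y)
      (Pu S φ β θ x * (φ β θ x + S.c x)
        + 2 / (S.σ x) ^ 2 * (L S θ β - L S θ x)) x := by
  have hode := (hφ β θ hβ hθ).2.1 x hx
  have hd := (phi_hasDeriv S φ hφ hβ hθ hx.1).add (c_hasDeriv S hx.1)
  refine hd.congr_deriv ?_
  have hσ := sigma_sq_ne S hx.1
  unfold Pu L ell
  unfold ell at hode
  field_simp
  rw [eq_div_iff hσ]
  field_simp at hode
  nlinarith [hode, sq_nonneg (S.σ x)]

include hφ in
/-- the two-solution difference equation in explicit form. -/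
lemma w_hasDeriv {β₁ θ₁ β₂ θ₂ x : ℝ} (hβ₁ : 0 < β₁) (hθ₁ : 0 < θ₁)
    (hβ₂ : 0 < β₂) (hθ₂ : 0 < θ₂) (hx₁ : x ∈ Ioo 0 β₁) (hx₂ : x ∈ Ioo 0 β₂) :
    HasDerivAt (fun y => φ β₂ θ₂ y - φ β₁ θ₁ y)
      (Pw S φ β₁ θ₁ β₂ θ₂ x * (φ β₂ θ₂ x - φ β₁ θ₁ x)
        + 2 / (S.σ x) ^ 2 * ((L S θ₂ β₂ - S.π x θ₂) - (L S θ₁ β₁ - S.π x θ₁))) x := by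
  have hode₁ := (hφ β₁ θ₁ hβ₁ hθ₁).2.1 x hx₁
  have hode₂ := (hφ β₂ θ₂ hβ₂ hθ₂).2.1 x hx₂
  have hd := (phi_hasDeriv S φ hφ hβ₂ hθ₂ hx₁.1).sub (phi_hasDeriv S φ hφ hβ₁ hθ₁ hx₁.1)
  refine hd.congr_deriv ?_
  have hσ := sigma_sq_ne S hx₁.1
  unfold Pw L
  field_simp
  rw [eq_div_iff hσ]
  field_simp at hode₁ hode₂
  nlinarith [hode₁, hode₂, sq_nonneg (S.σ x)]

end Sol
end FreeBoundaryAux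

namespace FreeBoundaryAux

section Mem
variable (S : Setting) (φ : ℝ → ℝ → ℝ → ℝ)
variable (hφ : ∀ β θ : ℝ, 0 < β → 0 < θ → IsAuxSol S.ε S.b S.σ S.c S.π β θ 0 (φ β θ))

include hφ in
lemma contOn_Pu {β θ : ℝ} (hβ : 0 < β) (hθ : 0 < θ) :
    ContinuousOn (Pu S φ β θ) (Ioi 0) := by
  unfold Pu
  have hσ := S.hσ.continuousOn
  have h2 : ContinuousOn (fun x => 2 / (S.σ x) ^ 2) (Ioi (0:ℝ)) :=
    continuousOn_const.div (hσ.pow 2) (fun x hx => sigma_sq_ne S hx)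
  exact h2.mul (((continuousOn_const.mul (hσ.pow 2)).mul
    ((phi_cont S φ hφ hβ hθ).sub S.hc.continuousOn)).sub S.hb.continuousOn)

include hφ in
lemma contOn_Pw {β₁ θ₁ β₂ θ₂ : ℝ} (hβ₁ : 0 < β₁) (hθ₁ : 0 < θ₁)
    (hβ₂ : 0 < β₂) (hθ₂ : 0 < θ₂) :
    ContinuousOn (Pw S φ β₁ θ₁ β₂ θ₂) (Ioi 0) := by
  unfold Pw
  have hσ := S.hσ.continuousOn
  have h2 : ContinuousOn (fun x => 2 / (S.σ x) ^ 2) (Ioi (0:ℝ)) :=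
    continuousOn_const.div (hσ.pow 2) (fun x hx => sigma_sq_ne S hx)
  exact h2.mul (((continuousOn_const.mul (hσ.pow 2)).mul
    ((phi_cont S φ hφ hβ₁ hθ₁).add (phi_cont S φ hφ hβ₂ hθ₂))).sub S.hb.continuousOn)

lemma bound_of_contOn {f : ℝ → ℝ} {a b : ℝ} (ha : 0 < a)
    (hf : ContinuousOn f (Ioi 0)) : ∃ M, ∀ x ∈ Ioo a b, |f x| ≤ M := by
  obtain ⟨M, hM⟩ := (isCompact_Icc (a := a) (b := b)).exists_bound_of_continuousOn
    (hf.mono (fun x hx => lt_of_lt_of_le ha hx.1))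
  exact ⟨M, fun x hx => hM x ⟨hx.1.le, hx.2.le⟩⟩

lemma inv_sig_pos (S : Setting) {x : ℝ} (hx : 0 < x) : 0 < 2 / (S.σ x) ^ 2 :=
  div_pos two_pos (pow_pos (S.hσpos x hx) 2)

include hφ in
/-- partial membership: if `ℓ(·,θ) ≥ ℓ(β,θ)` on `(a,β)` then `φ_β ≥ -c` on `[a,β]`. -/
lemma phi_ge_on_Icc {β θ a : ℝ} (hβ : 0 < β) (hθ : 0 < θ) (ha : 0 < a) (haβ : a ≤ β)
    (hL : ∀ y ∈ Ioo a β, L S θ β ≤ L S θ y) :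
    ∀ x ∈ Icc a β, -(S.c x) ≤ φ β θ x := by
  have hbd : φ β θ β = -(S.c β) := (hφ β θ hβ hθ).2.2 β le_rfl
  have key : ∀ x ∈ Icc a β, 0 ≤ φ β θ x + S.c x := by
    apply back_nonneg haβ
    · exact ((phi_cont S φ hφ hβ hθ).add S.hc.continuousOn).mono
        (fun x hx => lt_of_lt_of_le ha hx.1)
    · exact fun x hx => u_hasDeriv S φ hφ hβ hθ ⟨lt_of_lt_of_le ha hx.1.le, hx.2⟩
    · exact bound_of_contOn ha (contOn_Pu S φ hφ hβ hθ)
    · intro x hx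
      have h1 : L S θ β - L S θ x ≤ 0 := by linarith [hL x hx]
      have h2 : 0 < 2 / (S.σ x) ^ 2 := inv_sig_pos S (lt_of_lt_of_le ha hx.1.le)
      exact mul_nonpos_of_nonneg_of_nonpos h2.le h1
    · rw [hbd]; ring_nf; exact le_refl _
  intro x hx
  linarith [key x hx]

include hφ in
/-- full membership from the outer criterion. -/
lemma mem_Bset_of_L_ge {β θ : ℝ} (hβ : 0 < β) (hθ : 0 < θ)
    (hL : ∀ y ∈ Ioo 0 β, L S θ β ≤ L S θ y) :
    β ∈ S.Bset φ θ := by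
  refine ⟨hβ, fun x hx hxβ => ?_⟩
  rcases eq_or_lt_of_le hxβ with rfl | h
  · rw [(hφ x θ hβ hθ).2.2 x le_rfl]
  · exact phi_ge_on_Icc S φ hφ hβ hθ hx h.le
      (fun y hy => hL y ⟨lt_trans hx hy.1, hy.2⟩) x ⟨le_rfl, h.le⟩

include hφ in
/-- every member of `B(θ)` lies above `x̂(θ)`. -/
lemma xhat_le_of_mem_Bset {β θ : ℝ} (hθ : 0 < θ) (hmem : β ∈ S.Bset φ θ) :
    S.xhat θ ≤ β := by
  by_contra hcon
  push_neg at hcon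
  obtain ⟨hβ, hB⟩ := hmem
  have h2β : 0 < β / 2 := by linarith
  apply back_violation (a := β/2) (b := β) (by linarith)
    (((phi_cont S φ hφ hβ hθ).add S.hc.continuousOn).mono
      (fun x hx => lt_of_lt_of_le h2β hx.1))
    (fun x hx => u_hasDeriv S φ hφ hβ hθ ⟨lt_trans h2β hx.1, hx.2⟩)
    (bound_of_contOn h2β (contOn_Pu S φ hφ hβ hθ))
  · intro x hx
    have hxpos : 0 < x := lt_trans h2β hx.1
    have h1 : L S θ x < L S θ β := L_lt_of_le_xhat S hθ hxpos hx.2 hcon.le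
    have h2 : 0 < 2 / (S.σ x) ^ 2 := inv_sig_pos S hxpos
    have : 0 < L S θ β - L S θ x := by linarith
    exact mul_pos h2 this
  · rw [Pi.add_apply, (hφ β θ hβ hθ).2.2 β le_rfl]; ring
  · intro x hx
    rw [Pi.add_apply]
    linarith [hB x (lt_of_lt_of_le h2β hx.1) hx.2]

end Mem
end FreeBoundaryAux

namespace FreeBoundaryAux

section Trans
variable (S : Setting) (φ : ℝ → ℝ → ℝ → ℝ)
variable (hφ : ∀ β θ : ℝ, 0 < β → 0 < θ → IsAuxSol S.ε S.b S.σ S.c S.π β θ 0 (φ β θ))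

/-- `π_x(x,·)` is strictly decreasing in `θ`. -/
lemma pix_strictAnti (S : Setting) {x : ℝ} (hx : 0 < x) :
    StrictAntiOn (fun t => deriv (fun x' => S.π x' t) x) (Ioi 0) := by
  apply strictAntiOn_of_deriv_neg (convex_Ioi 0)
  · intro t ht
    have hdiff : DifferentiableAt ℝ (fun t' => deriv (fun x' => S.π x' t') x) t := by
      by_contra hnd
      have h0 := deriv_zero_of_not_differentiableAt hnd
      have := S.hπxθneg x t hx ht
      rw [h0] at this
      exact lt_irrefl 0 this
    exact hdiff.continuousAt.continuousWithinAt
  · intro t ht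
    rw [interior_Ioi] at ht
    exact S.hπxθneg x t hx ht

lemma pi_diffOn (S : Setting) {θ : ℝ} (hθ : 0 < θ) :
    DifferentiableOn ℝ (fun x => S.π x θ) (Ioi 0) :=
  (S.hπC2 θ hθ).differentiableOn (by norm_num)

lemma pi_diffAt (S : Setting) {θ x : ℝ} (hθ : 0 < θ) (hx : 0 < x) :
    DifferentiableAt ℝ (fun x' => S.π x' θ) x :=
  (pi_diffOn S hθ).differentiableAt (isOpen_Ioi.mem_nhds hx)

/-- `θ ↦ π(β,θ) - π(x,θ)` is nonincreasing for `x ≤ β`: mixed-derivative comparison. -/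
lemma pi_increment_anti (S : Setting) {θ θ'' x β : ℝ} (hθ : 0 < θ) (hθ'' : 0 < θ'')
    (hθle : θ ≤ θ'') (hx : 0 < x) (hxβ : x ≤ β) :
    S.π β θ'' - S.π β θ ≤ S.π x θ'' - S.π x θ := by
  rcases eq_or_lt_of_le hxβ with rfl | hlt
  · exact le_rfl
  have hanti : AntitoneOn (fun y => S.π y θ'' - S.π y θ) (Icc x β) := by
    apply antitoneOn_of_deriv_nonpos (convex_Icc _ _)
    · exact ((pi_diffOn S hθ'').sub (pi_diffOn S hθ)).continuousOn.mono
        (fun y hy => lt_of_lt_of_le hx hy.1)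
    · intro y hy
      rw [interior_Icc] at hy
      have hy0 : 0 < y := lt_trans hx hy.1
      exact ((pi_diffAt S hθ'' hy0).sub (pi_diffAt S hθ hy0)).differentiableWithinAt
    · intro y hy
      rw [interior_Icc] at hy
      have hy0 : 0 < y := lt_trans hx hy.1
      rw [deriv_fun_sub (pi_diffAt S hθ'' hy0) (pi_diffAt S hθ hy0)]
      have hle : deriv (fun x' => S.π x' θ'') y ≤ deriv (fun x' => S.π x' θ) y := by
        rcases eq_or_lt_of_le hθle with rfl | h
        · exact le_rfl
        · exact (pix_strictAnti S hy0 hθ hθ'' h).le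
      linarith
  exact hanti (left_mem_Icc.2 hxβ) (right_mem_Icc.2 hxβ) hxβ

include hφ in
/-- monotonicity of the sets `B(θ)` in `θ`. -/
lemma Bset_mono {θ θ'' : ℝ} (hθ : 0 < θ) (hθ'' : 0 < θ'') (hle : θ ≤ θ'') :
    S.Bset φ θ ⊆ S.Bset φ θ'' := by
  intro β hmem
  obtain ⟨hβ, hB⟩ := hmem
  refine ⟨hβ, fun x hx hxβ => ?_⟩
  rcases eq_or_lt_of_le hxβ with rfl | hxlt
  · rw [(hφ x θ'' hβ hθ'').2.2 x le_rfl]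
  -- w := φ_{β,θ''} - φ_{β,θ} ≥ 0 on [x,β]
  have hkey : ∀ z ∈ Icc x β, 0 ≤ φ β θ'' z - φ β θ z := by
    apply back_nonneg hxβ
    · exact ((phi_cont S φ hφ hβ hθ'').sub (phi_cont S φ hφ hβ hθ)).mono
        (fun z hz => lt_of_lt_of_le hx hz.1)
    · exact fun z hz => w_hasDeriv S φ hφ hβ hθ hβ hθ''
        ⟨lt_trans hx hz.1, hz.2⟩ ⟨lt_trans hx hz.1, hz.2⟩
    · exact bound_of_contOn hx (contOn_Pw S φ hφ hβ hθ hβ hθ'')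
    · intro z hz
      have hz0 : 0 < z := lt_trans hx hz.1
      have hdiff : (L S θ'' β - S.π z θ'') - (L S θ β - S.π z θ) ≤ 0 := by
        have h1 : L S θ'' β - L S θ β = S.π β θ'' - S.π β θ := L_theta_diff S θ θ'' β
        have h2 := pi_increment_anti S hθ hθ'' hle hz0 hz.2.le
        linarith
      exact mul_nonpos_of_nonneg_of_nonpos (inv_sig_pos S hz0).le hdiff
    · rw [(hφ β θ'' hβ hθ'').2.2 β le_rfl, (hφ β θ hβ hθ).2.2 β le_rfl]
      ring_nf; exact le_refl _
  have h1 := hkey x ⟨le_rfl, hxβ⟩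
  have h2 := hB x hx hxβ
  linarith

include hφ in
/-- the key transfer lemma: membership of `β₁` at `θ` propagates to `β₂ > β₁` at `θ'`. -/
lemma mem_Bset_transfer {θ θ' β₁ β₂ : ℝ} (hθ : 0 < θ) (hθ' : 0 < θ')
    (hmem : β₁ ∈ S.Bset φ θ) (h12 : β₁ < β₂)
    (h1 : ∀ y ∈ Ico β₁ β₂, L S θ' β₂ ≤ L S θ' y)
    (h2 : ∀ x ∈ Ioo 0 β₁, (L S θ' β₂ - S.π x θ') - (L S θ β₁ - S.π x θ) ≤ 0) :
    β₂ ∈ S.Bset φ θ' := by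
  obtain ⟨hβ₁, hB⟩ := hmem
  have hβ₂ : 0 < β₂ := lt_trans hβ₁ h12
  -- step 1: φ_{β₂,θ'} ≥ -c on [β₁,β₂]
  have hstep1 : ∀ x ∈ Icc β₁ β₂, -(S.c x) ≤ φ β₂ θ' x :=
    phi_ge_on_Icc S φ hφ hβ₂ hθ' hβ₁ h12.le
      (fun y hy => h1 y ⟨hy.1.le, hy.2⟩)
  -- step 2: φ_{β₂,θ'} ≥ φ_{β₁,θ} on (0,β₁]
  have hstep2 : ∀ x, 0 < x → x ≤ β₁ → φ β₁ θ x ≤ φ β₂ θ' x := by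
    intro x hx hxβ
    have hkey : ∀ z ∈ Icc x β₁, 0 ≤ φ β₂ θ' z - φ β₁ θ z := by
      apply back_nonneg hxβ
      · exact ((phi_cont S φ hφ hβ₂ hθ').sub (phi_cont S φ hφ hβ₁ hθ)).mono
          (fun z hz => lt_of_lt_of_le hx hz.1)
      · exact fun z hz => w_hasDeriv S φ hφ hβ₁ hθ hβ₂ hθ'
          ⟨lt_trans hx hz.1, hz.2⟩ ⟨lt_trans hx hz.1, lt_trans hz.2 h12⟩
      · exact bound_of_contOn hx (contOn_Pw S φ hφ hβ₁ hθ hβ₂ hθ')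
      · intro z hz
        have hz0 : 0 < z := lt_trans hx hz.1
        exact mul_nonpos_of_nonneg_of_nonpos (inv_sig_pos S hz0).le
          (h2 z ⟨hz0, hz.2⟩)
      · have hb1 : φ β₁ θ β₁ = -(S.c β₁) := (hφ β₁ θ hβ₁ hθ).2.2 β₁ le_rfl
        have hb2 := hstep1 β₁ ⟨le_rfl, h12.le⟩
        rw [hb1]; linarith
    linarith [hkey x ⟨le_rfl, hxβ⟩]
  refine ⟨hβ₂, fun x hx hxβ => ?_⟩
  rcases le_or_gt x β₁ with hle | hgt
  · exact le_trans (hB x hx hle) (hstep2 x hx hle)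
  · exact hstep1 x ⟨hgt.le, hxβ⟩

end Trans
end FreeBoundaryAux

namespace FreeBoundaryAux

section Glue
variable (S : Setting) (φ : ℝ → ℝ → ℝ → ℝ)
variable (hφ : ∀ β θ : ℝ, 0 < β → 0 < θ → IsAuxSol S.ε S.b S.σ S.c S.π β θ 0 (φ β θ))

include hφ in
lemma Bset_nonempty {θ : ℝ} (hθ : 0 < θ) : (S.Bset φ θ).Nonempty := by
  obtain ⟨β, hβx, hβeq⟩ := S.hxunder θ hθ
  have hβpos : 0 < β := lt_of_lt_of_le (S.hxhatpos θ hθ) hβx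
  refine ⟨β, mem_Bset_of_L_ge S φ hφ hβpos hθ ?_⟩
  intro y hy
  have hLβ : L S θ β = S.ell0 θ := hβeq
  rcases le_or_gt y (S.xhat θ) with h | h
  · rw [hLβ]; exact (ell0_lt_L S hθ hy.1 h).le
  · exact L_le_of_ge_xhat S hθ h.le hy.2.le

lemma bddBelow_Bset {θ : ℝ} : BddBelow (S.Bset φ θ) :=
  ⟨0, fun β hβ => hβ.1.le⟩

include hφ in
lemma xhat_le_betaE {θ : ℝ} (hθ : 0 < θ) : S.xhat θ ≤ S.betaE φ θ :=
  le_csInf (Bset_nonempty S φ hφ hθ)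
    (fun β hβ => xhat_le_of_mem_Bset S φ hφ hθ hβ)

end Glue

/-- the Lipschitz constant used on `(0,R]`. -/
def Kbig (C dl R : ℝ) : ℝ := C * (1 + (max 1 R) ^ dl)

lemma Kbig_pos {C dl R : ℝ} (hC : 0 < C) : 0 < Kbig C dl R := by
  have h1 : (0:ℝ) < (max 1 R) ^ dl :=
    Real.rpow_pos_of_pos (lt_of_lt_of_le one_pos (le_max_left _ _)) _
  unfold Kbig
  positivity

section Lip
variable (S : Setting) (dl C : ℝ)
variable (hdl : dl ∈ Ioo (0:ℝ) 1) (hC : 0 < C)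
variable (hlip : ∀ x θ₁ θ₂ : ℝ, 0 < x → 0 < θ₁ → 0 < θ₂ →
    |S.π x θ₂ - S.π x θ₁| ≤ C * (1 + x ^ dl) * |θ₂ - θ₁|)

include hdl hC hlip in
lemma pi_transfer {x R θ₁ θ₂ : ℝ} (hx : 0 < x) (hxR : x ≤ R)
    (hθ₁ : 0 < θ₁) (hθ₂ : 0 < θ₂) :
    |S.π x θ₂ - S.π x θ₁| ≤ Kbig C dl R * |θ₂ - θ₁| := by
  have h1 := hlip x θ₁ θ₂ hx hθ₁ hθ₂
  have h2 : x ^ dl ≤ (max 1 R) ^ dl :=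
    Real.rpow_le_rpow hx.le (le_trans hxR (le_max_right _ _)) hdl.1.le
  calc |S.π x θ₂ - S.π x θ₁| ≤ C * (1 + x ^ dl) * |θ₂ - θ₁| := h1
    _ ≤ Kbig C dl R * |θ₂ - θ₁| := by
        unfold Kbig
        apply mul_le_mul_of_nonneg_right _ (abs_nonneg _)
        nlinarith

include hdl hC hlip in
lemma L_transfer {x R θ₁ θ₂ : ℝ} (hx : 0 < x) (hxR : x ≤ R)
    (hθ₁ : 0 < θ₁) (hθ₂ : 0 < θ₂) :
    |L S θ₂ x - L S θ₁ x| ≤ Kbig C dl R * |θ₂ - θ₁| := by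
  rw [L_theta_diff S θ₁ θ₂ x]
  exact pi_transfer S dl C hdl hC hlip hx hxR hθ₁ hθ₂

include hdl hC hlip in
/-- stability of `x̂` from above. -/
lemma xhat_upper {θ₀ ρ : ℝ} (hθ₀ : 0 < θ₀) (hρ : 0 < ρ) :
    ∃ η > 0, ∀ θ : ℝ, 0 < θ → |θ - θ₀| < η → S.xhat θ ≤ S.xhat θ₀ + ρ := by
  have hx₀ := S.hxhatpos θ₀ hθ₀
  have hy₁pos : 0 < S.xhat θ₀ + ρ/3 := by linarith
  have hy₁₂ : S.xhat θ₀ + ρ/3 < S.xhat θ₀ + 2*ρ/3 := by linarith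
  have hm : 0 < L S θ₀ (S.xhat θ₀ + ρ/3) - L S θ₀ (S.xhat θ₀ + 2*ρ/3) := by
    have := L_lt_of_ge_xhat S hθ₀ (by linarith : S.xhat θ₀ ≤ S.xhat θ₀ + ρ/3) hy₁₂
    linarith
  have hKpos : 0 < Kbig C dl (S.xhat θ₀ + 2*ρ/3) := Kbig_pos hC
  refine ⟨(L S θ₀ (S.xhat θ₀ + ρ/3) - L S θ₀ (S.xhat θ₀ + 2*ρ/3))
      / (2 * Kbig C dl (S.xhat θ₀ + 2*ρ/3) + 1), by positivity, ?_⟩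
  intro θ hθ hclose
  by_contra hcon
  push_neg at hcon
  have hy₂x : S.xhat θ₀ + 2*ρ/3 ≤ S.xhat θ := by linarith
  have hlt : L S θ (S.xhat θ₀ + ρ/3) < L S θ (S.xhat θ₀ + 2*ρ/3) :=
    L_lt_of_le_xhat S hθ hy₁pos hy₁₂ hy₂x
  have t₁ := abs_le.1 (L_transfer S dl C hdl hC hlip hy₁pos hy₁₂.le hθ₀ hθ)
  have t₂ := abs_le.1 (L_transfer S dl C hdl hC hlip (lt_trans hy₁pos hy₁₂) le_rfl hθ₀ hθ)
  have hmul := (lt_div_iff₀ (by positivity)).1 hclose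
  linarith [t₁.1, t₂.2, abs_nonneg (θ - θ₀)]

include hdl hC hlip in
/-- stability of `x̂` from below. -/
lemma xhat_lower {θ₀ ρ : ℝ} (hθ₀ : 0 < θ₀) (hρ : 0 < ρ) :
    ∃ η > 0, ∀ θ : ℝ, 0 < θ → |θ - θ₀| < η → S.xhat θ₀ - ρ ≤ S.xhat θ := by
  have hx₀ := S.hxhatpos θ₀ hθ₀
  obtain ⟨ρ', hρ'pos, hρ'le, hρ'x⟩ :
      ∃ ρ', 0 < ρ' ∧ ρ' ≤ ρ ∧ ρ' ≤ S.xhat θ₀ / 2 :=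
    ⟨min ρ (S.xhat θ₀ / 2), lt_min hρ (by linarith), min_le_left _ _, min_le_right _ _⟩
  have hy₁pos : 0 < S.xhat θ₀ - 2*ρ'/3 := by linarith
  have hy₁₂ : S.xhat θ₀ - 2*ρ'/3 < S.xhat θ₀ - ρ'/3 := by linarith
  have hy₂x : S.xhat θ₀ - ρ'/3 ≤ S.xhat θ₀ := by linarith
  have hm : 0 < L S θ₀ (S.xhat θ₀ - ρ'/3) - L S θ₀ (S.xhat θ₀ - 2*ρ'/3) := by
    have := L_lt_of_le_xhat S hθ₀ hy₁pos hy₁₂ hy₂x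
    linarith
  have hKpos : 0 < Kbig C dl (S.xhat θ₀ - ρ'/3) := Kbig_pos hC
  refine ⟨(L S θ₀ (S.xhat θ₀ - ρ'/3) - L S θ₀ (S.xhat θ₀ - 2*ρ'/3))
      / (2 * Kbig C dl (S.xhat θ₀ - ρ'/3) + 1), by positivity, ?_⟩
  intro θ hθ hclose
  by_contra hcon
  push_neg at hcon
  have hxy₁ : S.xhat θ ≤ S.xhat θ₀ - 2*ρ'/3 := by linarith
  have hlt : L S θ (S.xhat θ₀ - ρ'/3) < L S θ (S.xhat θ₀ - 2*ρ'/3) :=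
    L_lt_of_ge_xhat S hθ hxy₁ hy₁₂
  have t₁ := abs_le.1 (L_transfer S dl C hdl hC hlip hy₁pos hy₁₂.le hθ₀ hθ)
  have t₂ := abs_le.1 (L_transfer S dl C hdl hC hlip (lt_trans hy₁pos hy₁₂) le_rfl hθ₀ hθ)
  have hmul := (lt_div_iff₀ (by positivity)).1 hclose
  linarith [t₁.2, t₂.1, abs_nonneg (θ - θ₀)]

end Lip
end FreeBoundaryAux

open FreeBoundaryAux in
/-- the free-boundary map `θ ↦ β_ε(θ)` is continuous on `(0,∞)`. -/
theorem free_boundary_continuous (S : Setting) (φ : ℝ → ℝ → ℝ → ℝ)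
    (hφ : ∀ β θ : ℝ, 0 < β → 0 < θ → IsAuxSol S.ε S.b S.σ S.c S.π β θ 0 (φ β θ))
    (x₀ : ℝ) (hx₀ : 0 < x₀)
    (hspeed : ∀ x : ℝ, 0 < x →
      IntegrableOn (fun y => 2 / ((S.σ y) ^ 2 * S.scaleD x₀ y)) (Ioo 0 x))
    (hLip : ∃ δ ∈ Ioo (0 : ℝ) 1, ∃ C > (0 : ℝ), ∀ x θ₁ θ₂ : ℝ,
      0 < x → 0 < θ₁ → 0 < θ₂ → |S.π x θ₂ - S.π x θ₁| ≤ C * (1 + x ^ δ) * |θ₂ - θ₁|) :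
    ContinuousOn (fun θ => S.betaE φ θ) (Ioi 0) := by
  classical
  obtain ⟨dl, hdl, C, hC, hlip⟩ := hLip
  intro θ₀ hθ₀
  rw [Metric.continuousWithinAt_iff]
  intro ε hε
  have hδ : 0 < ε / 2 := by linarith
  set d : ℝ := ε / 2 with hd
  have hθ₀' : (0:ℝ) < θ₀ := hθ₀
  have hne₀ : (S.Bset φ θ₀).Nonempty := Bset_nonempty S φ hφ hθ₀'
  have hβx : S.xhat θ₀ ≤ S.betaE φ θ₀ := xhat_le_betaE S φ hφ hθ₀'
  have hβpos : 0 < S.betaE φ θ₀ := lt_of_lt_of_le (S.hxhatpos θ₀ hθ₀') hβx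
  -- monotone (trivial-side) bounds
  have hmono : ∀ θ : ℝ, 0 < θ → θ₀ ≤ θ → S.betaE φ θ ≤ S.betaE φ θ₀ := fun θ hθ hle =>
    csInf_le_csInf (bddBelow_Bset S φ) hne₀ (Bset_mono S φ hφ hθ₀' hθ hle)
  have hmono' : ∀ θ : ℝ, 0 < θ → θ ≤ θ₀ → S.betaE φ θ₀ ≤ S.betaE φ θ := fun θ hθ hle =>
    csInf_le_csInf (bddBelow_Bset S φ) (Bset_nonempty S φ hφ hθ)
      (Bset_mono S φ hφ hθ hθ₀' hle)
  ---- UPPER BOUND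
  obtain ⟨β₁, hβ₁B, hβ₁lt⟩ : ∃ β₁ ∈ S.Bset φ θ₀, β₁ < S.betaE φ θ₀ + d/2 :=
    exists_lt_of_csInf_lt hne₀ (by unfold Setting.betaE; linarith)
  have hβ₁pos : 0 < β₁ := hβ₁B.1
  have hβ₁x : S.xhat θ₀ ≤ β₁ := xhat_le_of_mem_Bset S φ hφ hθ₀' hβ₁B
  have h12 : β₁ < S.betaE φ θ₀ + d := by linarith
  have hβ₂pos : 0 < S.betaE φ θ₀ + d := by linarith
  have hm₁ : 0 < L S θ₀ β₁ - L S θ₀ (S.betaE φ θ₀ + d) := by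
    have := L_lt_of_ge_xhat S hθ₀' hβ₁x h12
    linarith
  have hK₁pos : 0 < Kbig C dl (S.betaE φ θ₀ + d) := Kbig_pos hC
  have hupper : ∀ θ : ℝ, 0 < θ →
      |θ - θ₀| < (L S θ₀ β₁ - L S θ₀ (S.betaE φ θ₀ + d))
        / (4 * Kbig C dl (S.betaE φ θ₀ + d) + 1) →
      S.betaE φ θ ≤ S.betaE φ θ₀ + d := by
    intro θ hθ hclose
    rcases le_or_gt θ₀ θ with hge | hltθ
    · linarith [hmono θ hθ hge]
    have hmul := (lt_div_iff₀ (by positivity)).1 hclose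
    have habs : |θ - θ₀| = |θ₀ - θ| := abs_sub_comm _ _
    -- transfer estimates at β₁ and β₂ and any x ∈ (0,β₁)
    have tβ₂ := abs_le.1 (L_transfer S dl C hdl hC hlip hβ₂pos le_rfl hθ₀' hθ)
    have tβ₁ := abs_le.1 (L_transfer S dl C hdl hC hlip (R := S.betaE φ θ₀ + d)
      hβ₁pos (by linarith) hθ₀' hθ)
    have hLβorder : L S θ (S.betaE φ θ₀ + d) ≤ L S θ β₁ := by
      have h2K : 2 * Kbig C dl (S.betaE φ θ₀ + d) * |θ - θ₀|
          ≤ L S θ₀ β₁ - L S θ₀ (S.betaE φ θ₀ + d) := by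
        have hKd : 0 ≤ Kbig C dl (S.betaE φ θ₀ + d) * |θ - θ₀| :=
          mul_nonneg hK₁pos.le (abs_nonneg _)
        linarith [abs_nonneg (θ - θ₀)]
      linarith [tβ₂.1, tβ₂.2, tβ₁.1, tβ₁.2]
    have hmem₂ : (S.betaE φ θ₀ + d) ∈ S.Bset φ θ := by
      apply mem_Bset_transfer S φ hφ hθ₀' hθ hβ₁B h12
      · intro y hy
        have hmin := L_quasiconcave S (θ := θ) (a := β₁) (b := S.betaE φ θ₀ + d)
          hθ hβ₁pos hy.1 hy.2.le
        exact le_trans (le_of_eq (min_eq_right hLβorder).symm) hmin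
      · intro x hx
        have tx := abs_le.1 (pi_transfer S dl C hdl hC hlip (R := S.betaE φ θ₀ + d) hx.1
          (le_trans hx.2.le (by linarith : β₁ ≤ S.betaE φ θ₀ + d)) hθ₀' hθ)
        have hKx : 2 * Kbig C dl (S.betaE φ θ₀ + d) * |θ - θ₀|
            ≤ L S θ₀ β₁ - L S θ₀ (S.betaE φ θ₀ + d) := by
          have hKd : 0 ≤ Kbig C dl (S.betaE φ θ₀ + d) * |θ - θ₀| :=
            mul_nonneg hK₁pos.le (abs_nonneg _)
          linarith [abs_nonneg (θ - θ₀)]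
        have hd₂ := L_theta_diff S θ₀ θ (S.betaE φ θ₀ + d)
        linarith [tβ₂.1, tβ₂.2, tx.1, tx.2]
    exact csInf_le (bddBelow_Bset S φ) hmem₂
  ---- LOWER BOUND
  have hlower : ∃ η > 0, ∀ θ : ℝ, 0 < θ → |θ - θ₀| < η →
      S.betaE φ θ₀ - d ≤ S.betaE φ θ := by
    rcases lt_or_ge (S.betaE φ θ₀ - d) (S.xhat θ₀) with hcA | hcB
    · -- case A: β* - d below x̂(θ₀); use stability of x̂
      obtain ⟨η, hη, hstab⟩ := xhat_lower S dl C hdl hC hlip hθ₀'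
        (show 0 < S.xhat θ₀ - (S.betaE φ θ₀ - d) by linarith)
      exact ⟨η, hη, fun θ hθ hclose => by
        have h1 := hstab θ hθ hclose
        have h2 := xhat_le_betaE S φ hφ hθ
        linarith⟩
    · -- case B
      have hbd : 0 < S.betaE φ θ₀ - d := lt_of_lt_of_le (S.hxhatpos θ₀ hθ₀') hcB
      have hμ : 0 < L S θ₀ (S.betaE φ θ₀ - d) - L S θ₀ (S.betaE φ θ₀ - d/2) := by
        have := L_lt_of_ge_xhat S (b := S.betaE φ θ₀ - d/2) hθ₀' hcB (by linarith)
        linarith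
      have hKpos : 0 < Kbig C dl (S.betaE φ θ₀) := Kbig_pos hC
      refine ⟨(L S θ₀ (S.betaE φ θ₀ - d) - L S θ₀ (S.betaE φ θ₀ - d/2))
          / (8 * Kbig C dl (S.betaE φ θ₀) + 1), by positivity, ?_⟩
      intro θ hθ hclose
      rcases le_or_gt θ θ₀ with hle | hgt
      · linarith [hmono' θ hθ hle]
      by_contra hcon
      push_neg at hcon
      obtain ⟨β₁', hβ₁'B, hβ₁'lt⟩ : ∃ β ∈ S.Bset φ θ, β < S.betaE φ θ₀ - d :=
        exists_lt_of_csInf_lt (Bset_nonempty S φ hφ hθ) hcon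
      have hβ₁'pos : 0 < β₁' := hβ₁'B.1
      have hβ₁'x : S.xhat θ ≤ β₁' := xhat_le_of_mem_Bset S φ hφ hθ hβ₁'B
      have h12' : β₁' < S.betaE φ θ₀ - d/2 := by linarith
      have hmul := (lt_div_iff₀ (by positivity)).1 hclose
      -- transfer estimates
      have t₂ := abs_le.1 (L_transfer S dl C hdl hC hlip (R := S.betaE φ θ₀)
        (show (0:ℝ) < S.betaE φ θ₀ - d/2 by linarith) (by linarith) hθ₀' hθ)
      have t₃ := abs_le.1 (L_transfer S dl C hdl hC hlip (R := S.betaE φ θ₀)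
        hbd (by linarith) hθ₀' hθ)
      have t₁ := abs_le.1 (L_transfer S dl C hdl hC hlip (R := S.betaE φ θ₀)
        hβ₁'pos (by linarith) hθ₀' hθ)
      have hβorder : L S θ (S.betaE φ θ₀ - d) ≤ L S θ β₁' :=
        L_le_of_ge_xhat S hθ hβ₁'x (by linarith)
      have hmem : (S.betaE φ θ₀ - d/2) ∈ S.Bset φ θ₀ := by
        apply mem_Bset_transfer S φ hφ hθ hθ₀' hβ₁'B h12'
        · intro y hy
          have hLorder : L S θ₀ (S.betaE φ θ₀ - d/2) ≤ L S θ₀ β₁' := by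
            have hKd : 0 ≤ Kbig C dl (S.betaE φ θ₀) * |θ - θ₀| :=
              mul_nonneg hKpos.le (abs_nonneg _)
            linarith [t₁.2, t₃.1, hβorder, abs_nonneg (θ - θ₀)]
          have hmin := L_quasiconcave S (θ := θ₀) (a := β₁') (b := S.betaE φ θ₀ - d/2)
            hθ₀' hβ₁'pos hy.1 hy.2.le
          calc L S θ₀ (S.betaE φ θ₀ - d/2)
              = min (L S θ₀ β₁') (L S θ₀ (S.betaE φ θ₀ - d/2)) := (min_eq_right hLorder).symm
            _ ≤ L S θ₀ y := hmin
        · intro x hx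
          have tx := abs_le.1 (pi_transfer S dl C hdl hC hlip (R := S.betaE φ θ₀) hx.1
            (le_trans hx.2.le (by linarith : β₁' ≤ S.betaE φ θ₀)) hθ₀' hθ)
          have hKd : 0 ≤ Kbig C dl (S.betaE φ θ₀) * |θ - θ₀| :=
            mul_nonneg hKpos.le (abs_nonneg _)
          linarith [t₂.1, t₂.2, t₃.1, tx.1, tx.2, hβorder, abs_nonneg (θ - θ₀)]
      have : S.betaE φ θ₀ ≤ S.betaE φ θ₀ - d/2 := csInf_le (bddBelow_Bset S φ) hmem
      linarith
  ---- COMBINE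
  obtain ⟨η₂, hη₂, hlow⟩ := hlower
  refine ⟨min ((L S θ₀ β₁ - L S θ₀ (S.betaE φ θ₀ + d))
      / (4 * Kbig C dl (S.betaE φ θ₀ + d) + 1)) η₂, lt_min (by positivity) hη₂, ?_⟩
  intro θ hθ hdist
  rw [Real.dist_eq] at hdist ⊢
  have h1 := hupper θ hθ (lt_of_lt_of_le hdist (min_le_left _ _))
  have h2 := hlow θ hθ (lt_of_lt_of_le hdist (min_le_right _ _))
  have : |S.betaE φ θ - S.betaE φ θ₀| ≤ d := abs_le.2 ⟨by linarith, by linarith⟩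
  have hde : d < ε := by rw [hd]; linarith
  exact lt_of_le_of_lt this hde
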